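/- If Δ' and Δ'' are each obtained from a simplicial complex Δ by (possibly different) sequences of edge contractions, under the naming convention where contracting v_S v_T yields the vertex v_{S∪T}, and the vertex sets of Δ' and Δ'' are identical (as sets of subsets of [n]), then Δ' = Δ'' as simplicial complexes. -/
import Mathlib


/-- A family of finite subsets is a simplicial complex if closed under subsets. -/
def IsComplex {V : Type*} (Δ : Set (Finset V)) : Prop :=
  ∀ F ∈ Δ, ∀ G : Finset V, G ⊆ F → G ∈ Δ

/-- Vertices arising from a complex on `[n]` by merging: indexed by subsets of `[n]`. -/
abbrev Vtx (n : ℕ) := Finset (Fin n)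

open Classical in
/-- Renaming map for the contraction of the edge `v_S v_T`: both `v_S` and `v_T`
become the merged vertex `v_{S ∪ T}`; other vertices keep their names. -/
noncomputable def renameV {n : ℕ} (S T X : Vtx n) : Vtx n :=
  if X = S ∨ X = T then S ∪ T else X

/-- Contraction of the edge `v_S v_T` in a complex whose vertices are indexed by
subsets of `[n]`: each face is replaced by its image under the renaming map. -/
noncomputable def contractC {n : ℕ} (Δ : Set (Finset (Vtx n))) (S T : Vtx n) :
    Set (Finset (Vtx n)) :=
  {G | ∃ F ∈ Δ, G = F.image (renameV S T)}

/-- One edge contraction step between complexes, with the naming convention that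
contracting `v_S v_T` yields the vertex `v_{S ∪ T}`. -/
def ContractStep {n : ℕ} (Δ Δ' : Set (Finset (Vtx n))) : Prop :=
  ∃ S T : Vtx n, S ≠ T ∧ ({S, T} : Finset (Vtx n)) ∈ Δ ∧ Δ' = contractC Δ S T

/-- The vertices of the initial complex are the singletons `{1}, …, {n}`. -/
def SingletonVerts {n : ℕ} (Δ : Set (Finset (Vtx n))) : Prop :=
  ∀ F ∈ Δ, ∀ X ∈ F, ∃ i : Fin n, X = ({i} : Finset (Fin n))

lemma subset_renameV {n : ℕ} (S T X : Vtx n) : X ⊆ renameV S T X := by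
  unfold renameV
  by_cases h : X = S ∨ X = T
  · rw [if_pos h]
    rcases h with rfl | rfl
    · exact Finset.subset_union_left
    · exact Finset.subset_union_right
  · rw [if_neg h]

lemma renameV_of_ne {n : ℕ} {S T X : Vtx n} (h1 : X ≠ S) (h2 : X ≠ T) :
    renameV S T X = X := by
  unfold renameV
  rw [if_neg]
  rintro (rfl | rfl) <;> simp_all

def Good {n : ℕ} (Γ : Set (Finset (Vtx n))) : Prop :=
  IsComplex Γ ∧ ∀ X Y : Vtx n, ({X} : Finset (Vtx n)) ∈ Γ →
    ({Y} : Finset (Vtx n)) ∈ Γ → X ≠ Y → Disjoint X Y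

lemma contractC_isComplex {n : ℕ} {Γ : Set (Finset (Vtx n))} (h : IsComplex Γ)
    (S T : Vtx n) : IsComplex (contractC Γ S T) := by
  rintro G ⟨F, hF, rfl⟩ G' hG'
  refine ⟨F.filter (fun x => renameV S T x ∈ G'), h F hF _ (Finset.filter_subset _ _), ?_⟩
  ext y
  simp only [Finset.mem_image, Finset.mem_filter]
  constructor
  · intro hy
    obtain ⟨x, hx, rfl⟩ := Finset.mem_image.mp (hG' hy)
    exact ⟨x, ⟨hx, hy⟩, rfl⟩
  · rintro ⟨x, ⟨hx, hy⟩, rfl⟩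
    exact hy

lemma vertex_contractC {n : ℕ} {Γ : Set (Finset (Vtx n))} (h : IsComplex Γ)
    (S T X : Vtx n) :
    ({X} : Finset (Vtx n)) ∈ contractC Γ S T ↔
      ∃ v : Vtx n, ({v} : Finset (Vtx n)) ∈ Γ ∧ renameV S T v = X := by
  constructor
  · rintro ⟨F, hF, hEq⟩
    have hX : X ∈ F.image (renameV S T) := by rw [← hEq]; exact Finset.mem_singleton_self X
    obtain ⟨v, hv, hvX⟩ := Finset.mem_image.mp hX
    exact ⟨v, h F hF {v} (Finset.singleton_subset_iff.mpr hv), hvX⟩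
  · rintro ⟨v, hv, rfl⟩
    exact ⟨{v}, hv, by simp⟩

lemma good_step {n : ℕ} {Γ Γ' : Set (Finset (Vtx n))} (hG : Good Γ)
    (h : ContractStep Γ Γ') : Good Γ' := by
  obtain ⟨hC, hD⟩ := hG
  obtain ⟨S, T, hST, hmem, rfl⟩ := h
  have hS : ({S} : Finset (Vtx n)) ∈ Γ := hC _ hmem _ (by simp)
  have hT : ({T} : Finset (Vtx n)) ∈ Γ := hC _ hmem _ (by simp)
  refine ⟨contractC_isComplex hC S T, ?_⟩
  intro X Y hX hY hXY
  obtain ⟨v, hv, rfl⟩ := (vertex_contractC hC S T X).mp hX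
  obtain ⟨w, hw, rfl⟩ := (vertex_contractC hC S T Y).mp hY
  by_cases hvST : v = S ∨ v = T
  · have hXv : renameV S T v = S ∪ T := by unfold renameV; rw [if_pos hvST]
    by_cases hwST : w = S ∨ w = T
    · exact absurd (by unfold renameV; rw [if_pos hvST, if_pos hwST]) hXY
    · push_neg at hwST
      have hYw : renameV S T w = w := renameV_of_ne hwST.1 hwST.2
      rw [hXv, hYw] at hXY ⊢
      have d1 : Disjoint S w := hD S w hS hw (Ne.symm hwST.1)
      have d2 : Disjoint T w := hD T w hT hw (Ne.symm hwST.2)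
      exact Finset.disjoint_union_left.mpr ⟨d1, d2⟩
  · push_neg at hvST
    have hXv : renameV S T v = v := renameV_of_ne hvST.1 hvST.2
    by_cases hwST : w = S ∨ w = T
    · have hYw : renameV S T w = S ∪ T := by unfold renameV; rw [if_pos hwST]
      rw [hXv, hYw] at hXY ⊢
      have d1 : Disjoint v S := hD v S hv hS hvST.1
      have d2 : Disjoint v T := hD v T hv hT hvST.2
      exact Finset.disjoint_union_right.mpr ⟨d1, d2⟩
    · push_neg at hwST
      have hYw : renameV S T w = w := renameV_of_ne hwST.1 hwST.2
      rw [hXv, hYw] at hXY ⊢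
      exact hD v w hv hw hXY

lemma good_rtg {n : ℕ} {Δ Δ' : Set (Finset (Vtx n))}
    (h : Relation.ReflTransGen ContractStep Δ Δ') (hG : Good Δ) : Good Δ' := by
  induction h with
  | refl => exact hG
  | tail _ hstep ih => exact good_step ih hstep

lemma exists_map {n : ℕ} {Δ Δ' : Set (Finset (Vtx n))}
    (h : Relation.ReflTransGen ContractStep Δ Δ') :
    ∃ φ : Vtx n → Vtx n, (∀ X, X ⊆ φ X) ∧
      Δ' = {G | ∃ F ∈ Δ, G = F.image φ} := by
  induction h with
  | refl =>
    refine ⟨id, fun X => subset_rfl, ?_⟩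
    ext G
    simp only [Set.mem_setOf_eq, Finset.image_id]
    exact ⟨fun h => ⟨G, h, rfl⟩, fun ⟨F, hF, e⟩ => e ▸ hF⟩
  | tail _ hstep ih =>
    obtain ⟨φ, hφ, rfl⟩ := ih
    obtain ⟨S, T, hST, hmem, rfl⟩ := hstep
    refine ⟨fun X => renameV S T (φ X), fun X => (hφ X).trans (subset_renameV S T (φ X)), ?_⟩
    ext G
    simp only [contractC, Set.mem_setOf_eq]
    constructor
    · rintro ⟨_, ⟨F, hF, rfl⟩, rfl⟩
      exact ⟨F, hF, by rw [Finset.image_image]; rfl⟩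
    · rintro ⟨F, hF, rfl⟩
      exact ⟨F.image φ, ⟨F, hF, rfl⟩, by rw [Finset.image_image]; rfl⟩

/-- two complexes obtained from `Δ` by sequences of edge contractions,
with the naming convention `v_S v_T ↦ v_{S ∪ T}`, coincide as soon as their vertex
sets coincide. -/
theorem contraction_eq_of_vertexSet_eq {n : ℕ} (Δ Δ' Δ'' : Set (Finset (Vtx n)))
    (hΔ : IsComplex Δ) (hinit : SingletonVerts Δ)
    (hseq' : Relation.ReflTransGen ContractStep Δ Δ')
    (hseq'' : Relation.ReflTransGen ContractStep Δ Δ'')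
    (hvert : {X : Vtx n | ({X} : Finset (Vtx n)) ∈ Δ'} =
             {X : Vtx n | ({X} : Finset (Vtx n)) ∈ Δ''}) :
    Δ' = Δ'' := by
  have hgood : Good Δ := by
    refine ⟨hΔ, ?_⟩
    intro X Y hX hY hXY
    obtain ⟨i, rfl⟩ := hinit _ hX _ (Finset.mem_singleton_self X)
    obtain ⟨j, rfl⟩ := hinit _ hY _ (Finset.mem_singleton_self Y)
    have : i ≠ j := by rintro rfl; exact hXY rfl
    have hne : ¬ j = i := fun h => this h.symm
    simp only [Finset.disjoint_singleton]
    exact this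
  have hgood'' : Good Δ'' := good_rtg hseq'' hgood
  obtain ⟨φ', hφ', h1⟩ := exists_map hseq'
  obtain ⟨φ'', hφ'', h2⟩ := exists_map hseq''
  have key : ∀ v : Vtx n, ({v} : Finset (Vtx n)) ∈ Δ → φ' v = φ'' v := by
    intro v hv
    obtain ⟨i, rfl⟩ := hinit _ hv _ (Finset.mem_singleton_self v)
    have hm1 : ({φ' {i}} : Finset (Vtx n)) ∈ Δ' := by
      rw [h1]; exact ⟨{({i} : Vtx n)}, hv, by simp⟩
    have hm2 : ({φ'' {i}} : Finset (Vtx n)) ∈ Δ'' := by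
      rw [h2]; exact ⟨{({i} : Vtx n)}, hv, by simp⟩
    have hm1' : ({φ' {i}} : Finset (Vtx n)) ∈ Δ'' := by
      have := Set.ext_iff.mp hvert (φ' {i})
      exact this.mp hm1
    by_contra hne
    have hd := hgood''.2 _ _ hm1' hm2 hne
    have hi1 : i ∈ φ' {i} := hφ' {i} (Finset.mem_singleton_self i)
    have hi2 : i ∈ φ'' {i} := hφ'' {i} (Finset.mem_singleton_self i)
    exact (Finset.disjoint_left.mp hd hi1) hi2
  rw [h1, h2]
  ext G
  simp only [Set.mem_setOf_eq]
  constructor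
  · rintro ⟨F, hF, rfl⟩
    refine ⟨F, hF, Finset.image_congr ?_⟩
    intro x hx
    exact key x (hΔ F hF {x} (Finset.singleton_subset_iff.mpr hx))
  · rintro ⟨F, hF, rfl⟩
    refine ⟨F, hF, (Finset.image_congr ?_)⟩
    intro x hx
    exact (key x (hΔ F hF {x} (Finset.singleton_subset_iff.mpr hx))).symm
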